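/- arXiv:2311.04657 — 4 statements merged into one kernel-verified Lean document; each statement's English description precedes it below -/
import Mathlib

section
/- Under the potential-outcomes consistency, independence of potential-outcome blocks, and randomization assumptions, the observed short-term proxy $S_2$ is conditionally independent of treatment $A$ given $(U_2, S_1)$: $\Pr[S_2=s_2 \mid U_2=u_2, S_1=s_1, A=a] = \Pr[S_2=s_2 \mid U_2=u_2, S_1=s_1]$. -/
open Finset
open scoped Classical

/-- Probability of an event on a finite discrete probability space with weights `w`. -/
noncomputable def dPr {Ω : Type*} [Fintype Ω] (w : Ω → ℝ) (P : Ω → Prop) : ℝ :=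
  ∑ ω, if P ω then w ω else 0

lemma dPr_congr {Ω : Type*} [Fintype Ω] (w : Ω → ℝ) {P Q : Ω → Prop}
    (h : ∀ ω, P ω ↔ Q ω) : dPr w P = dPr w Q := by
  unfold dPr
  exact Finset.sum_congr rfl fun ω _ => if_congr (h ω) rfl rfl

lemma dPr_split {Ω 𝒜 : Type*} [Fintype Ω] [Fintype 𝒜] (w : Ω → ℝ) (X : Ω → 𝒜)
    (P : Ω → Prop) :
    dPr w P = ∑ a' : 𝒜, dPr w (fun ω => X ω = a' ∧ P ω) := by
  unfold dPr
  rw [Finset.sum_comm]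
  refine Finset.sum_congr rfl fun ω _ => ?_
  by_cases hP : P ω
  · simp [hP, Finset.sum_ite_eq]
  · simp [hP]

/-- S₂ ⊥ A ∣ (U₂, S₁):
Pr[S₂=s₂ ∣ U₂=u₂, S₁=s₁, A=a] = Pr[S₂=s₂ ∣ U₂=u₂, S₁=s₁]. -/
theorem stmt1
    {Ω 𝒜 𝒮₁ 𝒮₂ 𝒰₂ : Type*} [Fintype Ω] [Fintype 𝒜]
    (w : Ω → ℝ) (hw : ∀ ω, 0 ≤ w ω) (hw1 : ∑ ω, w ω = 1)
    (A : Ω → 𝒜)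
    (S1po : 𝒜 → Ω → 𝒮₁) (U2po : 𝒜 → Ω → 𝒰₂) (S2po : 𝒰₂ → Ω → 𝒮₂)
    (S1 : Ω → 𝒮₁) (U2 : Ω → 𝒰₂) (S2 : Ω → 𝒮₂)
    (hS1 : ∀ ω, S1 ω = S1po (A ω) ω) (hU2 : ∀ ω, U2 ω = U2po (A ω) ω)
    (hS2 : ∀ ω, S2 ω = S2po (U2 ω) ω)
    -- (S₁(a))ₐ jointly independent of ((U₂(a))ₐ, (S₂(u₂))ᵤ₂)
    (hblock : ∀ (B1 : (𝒜 → 𝒮₁) → Prop) (B2 : (𝒜 → 𝒰₂) × (𝒰₂ → 𝒮₂) → Prop),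
      dPr w (fun ω => B1 (fun a => S1po a ω) ∧
          B2 (fun a => U2po a ω, fun u => S2po u ω))
        = dPr w (fun ω => B1 (fun a => S1po a ω))
          * dPr w (fun ω => B2 (fun a => U2po a ω, fun u => S2po u ω)))
    -- U₂(a) independent of S₂(u₂)
    (hU2S2 : ∀ (a : 𝒜) (u : 𝒰₂) (B1 : 𝒰₂ → Prop) (B2 : 𝒮₂ → Prop),
      dPr w (fun ω => B1 (U2po a ω) ∧ B2 (S2po u ω))
        = dPr w (fun ω => B1 (U2po a ω)) * dPr w (fun ω => B2 (S2po u ω)))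
    -- randomization: A independent of all potential outcomes
    (hrand : ∀ (C : 𝒜 → Prop)
      (B : (𝒜 → 𝒮₁) × (𝒜 → 𝒰₂) × (𝒰₂ → 𝒮₂) → Prop),
      dPr w (fun ω => C (A ω) ∧
          B (fun a => S1po a ω, fun a => U2po a ω, fun u => S2po u ω))
        = dPr w (fun ω => C (A ω))
          * dPr w (fun ω =>
              B (fun a => S1po a ω, fun a => U2po a ω, fun u => S2po u ω)))
    (u₂ : 𝒰₂) (s₁ : 𝒮₁) (s₂ : 𝒮₂) (a : 𝒜)
    (hpos : 0 < dPr w (fun ω => U2 ω = u₂ ∧ S1 ω = s₁ ∧ A ω = a))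
    (hpos' : 0 < dPr w (fun ω => U2 ω = u₂ ∧ S1 ω = s₁)) :
    dPr w (fun ω => S2 ω = s₂ ∧ U2 ω = u₂ ∧ S1 ω = s₁ ∧ A ω = a)
      / dPr w (fun ω => U2 ω = u₂ ∧ S1 ω = s₁ ∧ A ω = a)
      = dPr w (fun ω => S2 ω = s₂ ∧ U2 ω = u₂ ∧ S1 ω = s₁)
        / dPr w (fun ω => U2 ω = u₂ ∧ S1 ω = s₁) := by
  set p2 : ℝ := dPr w (fun ω => S2po u₂ ω = s₂) with hp2
  -- key factorization for each treatment value
  have key : ∀ a' : 𝒜,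
      dPr w (fun ω => A ω = a' ∧ U2po a' ω = u₂ ∧ S1po a' ω = s₁ ∧ S2po u₂ ω = s₂)
        = dPr w (fun ω => A ω = a' ∧ U2po a' ω = u₂ ∧ S1po a' ω = s₁) * p2 := by
    intro a'
    have h1 := hrand (· = a')
      (fun t => t.2.1 a' = u₂ ∧ t.1 a' = s₁ ∧ t.2.2 u₂ = s₂)
    have h2 := hrand (· = a') (fun t => t.2.1 a' = u₂ ∧ t.1 a' = s₁)
    have h3 := hblock (fun f => f a' = s₁) (fun t => t.1 a' = u₂ ∧ t.2 u₂ = s₂)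
    have h4 := hblock (fun f => f a' = s₁) (fun t => t.1 a' = u₂)
    have h5 := hU2S2 a' u₂ (· = u₂) (· = s₂)
    simp only at h1 h2 h3 h4 h5
    have e1 : dPr w (fun ω => A ω = a' ∧ U2po a' ω = u₂ ∧ S1po a' ω = s₁ ∧ S2po u₂ ω = s₂)
        = dPr w (fun ω => A ω = a' ∧ (U2po a' ω = u₂ ∧ S1po a' ω = s₁ ∧ S2po u₂ ω = s₂)) :=
      dPr_congr w (fun ω => by tauto)
    have e3 : dPr w (fun ω => U2po a' ω = u₂ ∧ S1po a' ω = s₁ ∧ S2po u₂ ω = s₂)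
        = dPr w (fun ω => S1po a' ω = s₁ ∧ (U2po a' ω = u₂ ∧ S2po u₂ ω = s₂)) :=
      dPr_congr w (fun ω => by tauto)
    have e4 : dPr w (fun ω => U2po a' ω = u₂ ∧ S1po a' ω = s₁)
        = dPr w (fun ω => S1po a' ω = s₁ ∧ U2po a' ω = u₂) :=
      dPr_congr w (fun ω => by tauto)
    rw [e1, h1, e3, h3, h5, h2, e4, h4]
    ring
  -- consistency rewrites
  have eL : dPr w (fun ω => S2 ω = s₂ ∧ U2 ω = u₂ ∧ S1 ω = s₁ ∧ A ω = a)
      = dPr w (fun ω => A ω = a ∧ U2po a ω = u₂ ∧ S1po a ω = s₁ ∧ S2po u₂ ω = s₂) := by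
    refine dPr_congr w (fun ω => ?_)
    constructor
    · rintro ⟨h2, hu, hs, ha⟩
      rw [hS2 ω, hu] at h2
      rw [hU2 ω, ha] at hu
      rw [hS1 ω, ha] at hs
      exact ⟨ha, hu, hs, h2⟩
    · rintro ⟨ha, hu, hs, h2⟩
      have hu' : U2 ω = u₂ := by rw [hU2 ω, ha]; exact hu
      refine ⟨?_, hu', by rw [hS1 ω, ha]; exact hs, ha⟩
      rw [hS2 ω, hu']; exact h2
  have eD : dPr w (fun ω => U2 ω = u₂ ∧ S1 ω = s₁ ∧ A ω = a)
      = dPr w (fun ω => A ω = a ∧ U2po a ω = u₂ ∧ S1po a ω = s₁) := by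
    refine dPr_congr w (fun ω => ?_)
    constructor
    · rintro ⟨hu, hs, ha⟩
      rw [hU2 ω, ha] at hu
      rw [hS1 ω, ha] at hs
      exact ⟨ha, hu, hs⟩
    · rintro ⟨ha, hu, hs⟩
      exact ⟨by rw [hU2 ω, ha]; exact hu, by rw [hS1 ω, ha]; exact hs, ha⟩
  -- split RHS over treatment values
  have eRN : dPr w (fun ω => S2 ω = s₂ ∧ U2 ω = u₂ ∧ S1 ω = s₁)
      = ∑ a' : 𝒜, dPr w (fun ω => A ω = a' ∧ U2po a' ω = u₂ ∧ S1po a' ω = s₁ ∧ S2po u₂ ω = s₂) := by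
    rw [dPr_split w A]
    refine Finset.sum_congr rfl fun a' _ => dPr_congr w (fun ω => ?_)
    constructor
    · rintro ⟨ha, h2, hu, hs⟩
      rw [hS2 ω, hu] at h2
      rw [hU2 ω, ha] at hu
      rw [hS1 ω, ha] at hs
      exact ⟨ha, hu, hs, h2⟩
    · rintro ⟨ha, hu, hs, h2⟩
      have hu' : U2 ω = u₂ := by rw [hU2 ω, ha]; exact hu
      exact ⟨ha, by rw [hS2 ω, hu']; exact h2, hu', by rw [hS1 ω, ha]; exact hs⟩
  have eRD : dPr w (fun ω => U2 ω = u₂ ∧ S1 ω = s₁)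
      = ∑ a' : 𝒜, dPr w (fun ω => A ω = a' ∧ U2po a' ω = u₂ ∧ S1po a' ω = s₁) := by
    rw [dPr_split w A]
    refine Finset.sum_congr rfl fun a' _ => dPr_congr w (fun ω => ?_)
    constructor
    · rintro ⟨ha, hu, hs⟩
      rw [hU2 ω, ha] at hu
      rw [hS1 ω, ha] at hs
      exact ⟨ha, hu, hs⟩
    · rintro ⟨ha, hu, hs⟩
      exact ⟨ha, by rw [hU2 ω, ha]; exact hu, by rw [hS1 ω, ha]; exact hs⟩
  have hDne : dPr w (fun ω => A ω = a ∧ U2po a ω = u₂ ∧ S1po a ω = s₁) ≠ 0 := by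
    rw [← eD]; exact ne_of_gt hpos
  have hDne' : dPr w (fun ω => U2 ω = u₂ ∧ S1 ω = s₁) ≠ 0 := ne_of_gt hpos'
  have eSum : (∑ a' : 𝒜, dPr w (fun ω => A ω = a' ∧ U2po a' ω = u₂ ∧ S1po a' ω = s₁ ∧ S2po u₂ ω = s₂))
      = dPr w (fun ω => U2 ω = u₂ ∧ S1 ω = s₁) * p2 := by
    conv_rhs => rw [eRD]
    simp only [key]
    rw [Finset.sum_mul]
  rw [eL, eD, key a, mul_comm, mul_div_assoc, div_self hDne, mul_one, eRN, eSum,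
    mul_comm, mul_div_assoc, div_self hDne', mul_one]
end

section
/- Suppose $S_2 \perp A \mid (S_1, U_2)$ and the completeness condition holds: for any function $g$, $E[g(S_1,U_2)\mid A]=0$ a.s. implies $g=0$ (on the support). If a bridge function $h$ satisfies $E[Y - h(S_1,S_2)\mid A]=0$ a.s. and a function $f$ satisfies $E[Y\mid A]=E[f(S_1,S_2,U_2)\mid A]$ a.s., then $E[f(S_1,S_2,U_2)-h(S_1,S_2)\mid S_1=s_1, U_2=u_2]=0$ for all $(s_1,u_2)$ in the support. -/
open Finset
open scoped Classical

noncomputable def dExp {Ω : Type*} [Fintype Ω] (w : Ω → ℝ) (f : Ω → ℝ) : ℝ :=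
  ∑ ω, w ω * f ω

lemma slice_sum {Ω β : Type*} [Fintype Ω] (X : Ω → β) (F : Ω → ℝ) :
    ∑ ω, F ω = ∑ b ∈ univ.image X, ∑ ω, if X ω = b then F ω else 0 := by
  rw [Finset.sum_comm]
  refine Finset.sum_congr rfl fun ω _ => ?_
  simp [Finset.sum_ite_eq, Finset.mem_image]

lemma dPr_zero_of {Ω : Type*} [Fintype Ω] (w : Ω → ℝ) (hw : ∀ ω, 0 ≤ w ω)
    (P : Ω → Prop) (hP : dPr w P = 0) : ∀ ω, P ω → w ω = 0 := by
  intro ω hω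
  have := (Finset.sum_eq_zero_iff_of_nonneg
    (by intro i _; by_cases h : P i <;> simp [h, hw i])).1 hP ω (mem_univ ω)
  simpa [hω] using this

lemma expand_s2 {Ω 𝒮₂ : Type*} [Fintype Ω] (w : Ω → ℝ) (S2 : Ω → 𝒮₂)
    (Q : Ω → Prop) (c : 𝒮₂ → ℝ) (φ : Ω → ℝ) (hφ : ∀ ω, Q ω → φ ω = c (S2 ω)) :
    ∑ ω, w ω * (if Q ω then φ ω else 0)
      = ∑ s₂ ∈ univ.image S2, c s₂ * dPr w (fun ω => S2 ω = s₂ ∧ Q ω) := by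
  unfold dPr
  simp_rw [Finset.mul_sum]
  rw [Finset.sum_comm]
  refine Finset.sum_congr rfl fun ω _ => ?_
  by_cases hq : Q ω
  · rw [hφ ω hq]
    simp only [hq, and_true, mul_ite, mul_zero, if_true]
    rw [Finset.sum_ite_eq (univ.image S2) (S2 ω) (fun s₂ => c s₂ * w ω)]
    simp [Finset.mem_image, mul_comm]
  · simp [hq]

/-- uniqueness of the bridge:
E[f(S₁,S₂,U₂) - h(S₁,S₂) ∣ S₁=s₁, U₂=u₂] = 0 on the support. -/
theorem stmt2
    {Ω 𝒜 𝒮₁ 𝒮₂ 𝒰₂ : Type*} [Fintype Ω]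
    (w : Ω → ℝ) (hw : ∀ ω, 0 ≤ w ω) (hw1 : ∑ ω, w ω = 1)
    (A : Ω → 𝒜) (S1 : Ω → 𝒮₁) (S2 : Ω → 𝒮₂) (U2 : Ω → 𝒰₂) (Y : Ω → ℝ)
    -- conditional independence S₂ ⊥ A ∣ (S₁, U₂)
    (hCI : ∀ (s₂ : 𝒮₂) (a : 𝒜) (s₁ : 𝒮₁) (u₂ : 𝒰₂),
      dPr w (fun ω => S2 ω = s₂ ∧ A ω = a ∧ S1 ω = s₁ ∧ U2 ω = u₂)
          * dPr w (fun ω => S1 ω = s₁ ∧ U2 ω = u₂)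
        = dPr w (fun ω => S2 ω = s₂ ∧ S1 ω = s₁ ∧ U2 ω = u₂)
          * dPr w (fun ω => A ω = a ∧ S1 ω = s₁ ∧ U2 ω = u₂))
    -- completeness of g ↦ E[g(S₁,U₂) ∣ A]
    (hcomp : ∀ g : 𝒮₁ → 𝒰₂ → ℝ,
      (∀ a : 𝒜, 0 < dPr w (fun ω => A ω = a) →
        dExp w (fun ω => if A ω = a then g (S1 ω) (U2 ω) else 0) = 0) →
      ∀ (s₁ : 𝒮₁) (u₂ : 𝒰₂), 0 < dPr w (fun ω => S1 ω = s₁ ∧ U2 ω = u₂) →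
        g s₁ u₂ = 0)
    (h : 𝒮₁ → 𝒮₂ → ℝ) (f : 𝒮₁ → 𝒮₂ → 𝒰₂ → ℝ)
    -- bridge: E[Y - h(S₁,S₂) ∣ A] = 0 a.s.
    (hbridge : ∀ a : 𝒜, 0 < dPr w (fun ω => A ω = a) →
      dExp w (fun ω => if A ω = a then Y ω - h (S1 ω) (S2 ω) else 0) = 0)
    -- E[Y ∣ A] = E[f(S₁,S₂,U₂) ∣ A] a.s.
    (hf : ∀ a : 𝒜, 0 < dPr w (fun ω => A ω = a) →
      dExp w (fun ω => if A ω = a then Y ω else 0)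
        = dExp w (fun ω => if A ω = a then f (S1 ω) (S2 ω) (U2 ω) else 0))
    (s₁ : 𝒮₁) (u₂ : 𝒰₂)
    (hpos : 0 < dPr w (fun ω => S1 ω = s₁ ∧ U2 ω = u₂)) :
    dExp w (fun ω => if S1 ω = s₁ ∧ U2 ω = u₂ then
        f (S1 ω) (S2 ω) (U2 ω) - h (S1 ω) (S2 ω) else 0)
      / dPr w (fun ω => S1 ω = s₁ ∧ U2 ω = u₂) = 0 := by
  -- notation
  set φ : Ω → ℝ := fun ω => f (S1 ω) (S2 ω) (U2 ω) - h (S1 ω) (S2 ω) with hφdef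
  set g : 𝒮₁ → 𝒰₂ → ℝ := fun s u =>
    dExp w (fun ω => if S1 ω = s ∧ U2 ω = u then φ ω else 0)
      / dPr w (fun ω => S1 ω = s ∧ U2 ω = u) with hgdef
  -- Z : E[1_{A=a} φ] = 0
  have hZ : ∀ a : 𝒜, 0 < dPr w (fun ω => A ω = a) →
      (∑ ω, w ω * (if A ω = a then φ ω else 0)) = 0 := by
    intro a ha
    have e1 := hbridge a ha
    have e2 := hf a ha
    unfold dExp at e1 e2
    have key : ∀ ω : Ω, w ω * (if A ω = a then φ ω else 0)
        = (w ω * (if A ω = a then f (S1 ω) (S2 ω) (U2 ω) else 0)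
            - w ω * (if A ω = a then Y ω else 0))
          + w ω * (if A ω = a then Y ω - h (S1 ω) (S2 ω) else 0) := by
      intro ω
      by_cases hA : A ω = a <;> simp [hA, hφdef] <;> ring
    rw [Finset.sum_congr rfl fun ω _ => key ω, Finset.sum_add_distrib,
      Finset.sum_sub_distrib, e1, ← e2]
    ring
  -- CI key identity
  have hL : ∀ (a : 𝒜) (s : 𝒮₁) (u : 𝒰₂),
      dPr w (fun ω => A ω = a ∧ S1 ω = s ∧ U2 ω = u)
        * (∑ ω, w ω * (if S1 ω = s ∧ U2 ω = u then φ ω else 0))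
      = (∑ ω, w ω * (if A ω = a ∧ S1 ω = s ∧ U2 ω = u then φ ω else 0))
        * dPr w (fun ω => S1 ω = s ∧ U2 ω = u) := by
    intro a s u
    have e1 : (∑ ω, w ω * (if S1 ω = s ∧ U2 ω = u then φ ω else 0))
        = ∑ s₂ ∈ univ.image S2, (f s s₂ u - h s s₂)
            * dPr w (fun ω => S2 ω = s₂ ∧ S1 ω = s ∧ U2 ω = u) := by
      have e := expand_s2 w S2 (fun ω => S1 ω = s ∧ U2 ω = u) (fun s₂ => f s s₂ u - h s s₂) φ
        (by rintro ω ⟨h1, h2⟩; simp [hφdef, h1, h2])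
      convert e using 2 <;> simp
    have e2 : (∑ ω, w ω * (if A ω = a ∧ S1 ω = s ∧ U2 ω = u then φ ω else 0))
        = ∑ s₂ ∈ univ.image S2, (f s s₂ u - h s s₂)
            * dPr w (fun ω => S2 ω = s₂ ∧ A ω = a ∧ S1 ω = s ∧ U2 ω = u) := by
      have e := expand_s2 w S2 (fun ω => A ω = a ∧ S1 ω = s ∧ U2 ω = u) (fun s₂ => f s s₂ u - h s s₂) φ
        (by rintro ω ⟨_, h1, h2⟩; simp [hφdef, h1, h2])
      convert e using 2 <;> simp
    rw [e1, e2, Finset.mul_sum, Finset.sum_mul]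
    refine Finset.sum_congr rfl fun s₂ _ => ?_
    linear_combination (h s s₂ - f s s₂ u) * hCI s₂ a s u
  -- completeness hypothesis for g
  have hstep : ∀ (a : 𝒜) (s : 𝒮₁) (u : 𝒰₂),
      dPr w (fun ω => A ω = a ∧ S1 ω = s ∧ U2 ω = u) * g s u
        = ∑ ω, w ω * (if A ω = a ∧ S1 ω = s ∧ U2 ω = u then φ ω else 0) := by
    intro a s u
    by_cases hD : dPr w (fun ω => S1 ω = s ∧ U2 ω = u) = 0
    · have hz := dPr_zero_of w hw _ hD
      have hPa : dPr w (fun ω => A ω = a ∧ S1 ω = s ∧ U2 ω = u) = 0 := by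
        unfold dPr
        refine Finset.sum_eq_zero fun ω _ => ?_
        by_cases hQ : A ω = a ∧ S1 ω = s ∧ U2 ω = u
        · simp [hQ, hz ω hQ.2]
        · simp [hQ]
      rw [hPa, zero_mul]
      refine (Finset.sum_eq_zero fun ω _ => ?_).symm
      by_cases hQ : A ω = a ∧ S1 ω = s ∧ U2 ω = u
      · simp [hQ, hz ω hQ.2]
      · simp [hQ]
    · have hL' := hL a s u
      have hg : g s u = (∑ ω, w ω * (if S1 ω = s ∧ U2 ω = u then φ ω else 0))
          / dPr w (fun ω => S1 ω = s ∧ U2 ω = u) := rfl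
      rw [hg, ← mul_div_assoc, div_eq_iff hD]
      exact hL'
  have hkey : ∀ a : 𝒜, 0 < dPr w (fun ω => A ω = a) →
      dExp w (fun ω => if A ω = a then g (S1 ω) (U2 ω) else 0) = 0 := by
    intro a ha
    unfold dExp
    rw [slice_sum (fun ω => (S1 ω, U2 ω))
        (fun ω => w ω * (if A ω = a then g (S1 ω) (U2 ω) else 0))]
    refine Eq.trans (Finset.sum_congr rfl fun b _ => ?_)
      (Eq.trans (slice_sum (fun ω => (S1 ω, U2 ω))
        (fun ω => w ω * (if A ω = a then φ ω else 0))).symm (hZ a ha))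
    obtain ⟨s, u⟩ := b
    refine Eq.trans ?_ (Eq.trans (hstep a s u) ?_)
    · unfold dPr
      rw [Finset.sum_mul]
      refine Finset.sum_congr rfl fun ω _ => ?_
      by_cases h1 : S1 ω = s <;> by_cases h2 : U2 ω = u <;> by_cases hA : A ω = a <;>
        simp [h1, h2, hA, Prod.ext_iff]
    · refine Finset.sum_congr rfl fun ω _ => ?_
      by_cases h1 : S1 ω = s <;> by_cases h2 : U2 ω = u <;> by_cases hA : A ω = a <;>
        simp [h1, h2, hA, Prod.ext_iff]
  exact hcomp g hkey s₁ u₂ hpos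
end

section
/- Any measurable minimizer $h^*$ of the cross-fold risk $R(h) = -E[E[Y\mid A, V=\tilde V] E[h(S)\mid A, V\neq \tilde V]] + \tfrac12 E[E[h(S)\mid A, V=\tilde V] E[h(S)\mid A, V\neq \tilde V]]$ over all square-integrable functions of $S$ satisfies the conditional moment restriction $E[Y - h^*(S)\mid A]=0$ almost surely, provided a solution to this restriction exists in the class. -/
open Finset
open scoped Classical

/-- E[f ∣ P] on a finite discrete probability space. -/
noncomputable def dCondExp {Ω : Type*} [Fintype Ω] (w : Ω → ℝ) (f : Ω → ℝ)
    (P : Ω → Prop) : ℝ :=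
  dExp w (fun ω => if P ω then f ω else 0) / dPr w P

/-- The population cross-fold risk
R(h) = -E[E[Y∣A]E[h(S)∣A]] + ½E[(E[h(S)∣A])²]
(since V ⊥ (A,S,Y), conditioning on V = Ṽ or V ≠ Ṽ is immaterial). -/
noncomputable def crossFoldRisk {Ω 𝒜 𝒮 : Type*} [Fintype Ω]
    (w : Ω → ℝ) (A : Ω → 𝒜) (S : Ω → 𝒮) (Y : Ω → ℝ) (h : 𝒮 → ℝ) : ℝ :=
  - dExp w (fun ω =>
      dCondExp w Y (fun ω' => A ω' = A ω)
        * dCondExp w (fun ω' => h (S ω')) (fun ω' => A ω' = A ω))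
  + (1 / 2) * dExp w (fun ω =>
      (dCondExp w (fun ω' => h (S ω')) (fun ω' => A ω' = A ω)) ^ 2)

lemma dCondExp_sub {Ω : Type*} [Fintype Ω] (w : Ω → ℝ) (f g : Ω → ℝ) (P : Ω → Prop) :
    dCondExp w (fun ω => f ω - g ω) P = dCondExp w f P - dCondExp w g P := by
  unfold dCondExp dExp
  rw [← sub_div]
  congr 1
  rw [← Finset.sum_sub_distrib]
  refine Finset.sum_congr rfl fun ω _ => ?_
  by_cases h : P ω <;> simp [h] <;> ring

lemma risk_eq {Ω 𝒜 𝒮 : Type*} [Fintype Ω] (w : Ω → ℝ) (A : Ω → 𝒜) (S : Ω → 𝒮)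
    (Y : Ω → ℝ) (h : 𝒮 → ℝ) :
    crossFoldRisk w A S Y h =
      ∑ ω, ((1/2) * w ω * (dCondExp w (fun ω' => h (S ω')) (fun ω' => A ω' = A ω)
              - dCondExp w Y (fun ω' => A ω' = A ω))^2
            - (1/2) * w ω * (dCondExp w Y (fun ω' => A ω' = A ω))^2) := by
  unfold crossFoldRisk dExp
  rw [Finset.mul_sum, ← Finset.sum_neg_distrib, ← Finset.sum_add_distrib]
  exact Finset.sum_congr rfl fun ω _ => by ring

/-- any minimizer of the cross-fold risk over all functions of S
solves the conditional moment restriction E[Y - h*(S) ∣ A] = 0 a.s., provided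
a solution exists. -/
theorem stmt4
    {Ω 𝒜 𝒮 : Type*} [Fintype Ω]
    (w : Ω → ℝ) (hw : ∀ ω, 0 ≤ w ω) (hw1 : ∑ ω, w ω = 1)
    (A : Ω → 𝒜) (S : Ω → 𝒮) (Y : Ω → ℝ)
    -- a solution to the conditional moment restriction exists
    (hexists : ∃ h₀ : 𝒮 → ℝ, ∀ a : 𝒜, 0 < dPr w (fun ω => A ω = a) →
      dCondExp w (fun ω => Y ω - h₀ (S ω)) (fun ω => A ω = a) = 0)
    (hstar : 𝒮 → ℝ)
    -- h* minimizes the cross-fold risk over all functions of S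
    (hmin : ∀ g : 𝒮 → ℝ, crossFoldRisk w A S Y hstar ≤ crossFoldRisk w A S Y g)
    (a : 𝒜) (ha : 0 < dPr w (fun ω => A ω = a)) :
    dCondExp w (fun ω => Y ω - hstar (S ω)) (fun ω => A ω = a) = 0 := by
  classical
  obtain ⟨h₀, hh₀⟩ := hexists
  have hpos : ∀ ω : Ω, 0 < w ω → 0 < dPr w (fun ω' => A ω' = A ω) := by
    intro ω hω
    have hle : w ω ≤ dPr w (fun ω' => A ω' = A ω) := by
      unfold dPr
      have := Finset.single_le_sum (f := fun ω' => if A ω' = A ω then w ω' else 0)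
        (fun i _ => by by_cases h : A i = A ω <;> simp [h, hw i]) (Finset.mem_univ ω)
      simpa using this
    linarith
  -- conditional mean of h₀ equals that of Y on positive-probability atoms
  have hY : ∀ b : 𝒜, 0 < dPr w (fun ω => A ω = b) →
      dCondExp w (fun ω' => h₀ (S ω')) (fun ω => A ω = b)
        = dCondExp w Y (fun ω => A ω = b) := by
    intro b hb
    have := hh₀ b hb
    rw [dCondExp_sub] at this
    linarith
  -- risk of h₀
  have hR0 : crossFoldRisk w A S Y h₀
      = ∑ ω : Ω, (- ((1:ℝ)/2) * w ω * (dCondExp w Y (fun ω' => A ω' = A ω))^2) := by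
    rw [risk_eq]
    refine Finset.sum_congr rfl fun ω _ => ?_
    rcases eq_or_lt_of_le (hw ω) with h0 | h0
    · rw [← h0]; ring
    · rw [hY (A ω) (hpos ω h0)]; ring
  have hRs := hmin h₀
  rw [risk_eq, hR0] at hRs
  have hsum : ∑ ω : Ω, ((1:ℝ)/2) * w ω *
      (dCondExp w (fun ω' => hstar (S ω')) (fun ω' => A ω' = A ω)
        - dCondExp w Y (fun ω' => A ω' = A ω))^2 ≤ 0 := by
    have := Finset.sum_sub_distrib (s := (Finset.univ : Finset Ω))
      (f := fun ω => ((1:ℝ)/2) * w ω *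
        (dCondExp w (fun ω' => hstar (S ω')) (fun ω' => A ω' = A ω)
          - dCondExp w Y (fun ω' => A ω' = A ω))^2)
      (g := fun ω => ((1:ℝ)/2) * w ω * (dCondExp w Y (fun ω' => A ω' = A ω))^2)
    rw [this] at hRs
    have heq : ∑ ω : Ω, (- ((1:ℝ)/2) * w ω * (dCondExp w Y (fun ω' => A ω' = A ω))^2)
        = - ∑ ω : Ω, ((1:ℝ)/2) * w ω * (dCondExp w Y (fun ω' => A ω' = A ω))^2 := by
      rw [← Finset.sum_neg_distrib]
      exact Finset.sum_congr rfl fun ω _ => by ring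
    rw [heq] at hRs
    linarith
  have hterm : ∀ ω : Ω, 0 < w ω →
      dCondExp w (fun ω' => hstar (S ω')) (fun ω' => A ω' = A ω)
        = dCondExp w Y (fun ω' => A ω' = A ω) := by
    intro ω hω
    have hnn : ∀ i ∈ (Finset.univ : Finset Ω), (0:ℝ) ≤ ((1:ℝ)/2) * w i *
        (dCondExp w (fun ω' => hstar (S ω')) (fun ω' => A ω' = A i)
          - dCondExp w Y (fun ω' => A ω' = A i))^2 := by
      intro i _
      have := hw i
      positivity
    have hz : ∑ ω : Ω, ((1:ℝ)/2) * w ω *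
        (dCondExp w (fun ω' => hstar (S ω')) (fun ω' => A ω' = A ω)
          - dCondExp w Y (fun ω' => A ω' = A ω))^2 = 0 :=
      le_antisymm hsum (Finset.sum_nonneg hnn)
    have := (Finset.sum_eq_zero_iff_of_nonneg hnn).mp hz ω (Finset.mem_univ ω)
    have hsq : (dCondExp w (fun ω' => hstar (S ω')) (fun ω' => A ω' = A ω)
        - dCondExp w Y (fun ω' => A ω' = A ω))^2 = 0 := by
      by_contra hne
      have : (0:ℝ) < (dCondExp w (fun ω' => hstar (S ω')) (fun ω' => A ω' = A ω)
          - dCondExp w Y (fun ω' => A ω' = A ω))^2 :=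
        lt_of_le_of_ne (sq_nonneg _) (Ne.symm hne)
      nlinarith
    have := pow_eq_zero_iff (n := 2) (by norm_num) |>.mp hsq
    linarith [sub_eq_zero.mp this]
  -- find ω₀ in the atom a with positive weight
  obtain ⟨ω₀, hω₀⟩ : ∃ ω : Ω, 0 < (if A ω = a then w ω else 0) := by
    by_contra hcon
    push_neg at hcon
    have : dPr w (fun ω => A ω = a) ≤ 0 := Finset.sum_nonpos fun i _ => hcon i
    linarith
  have hAa : A ω₀ = a := by
    by_contra h; rw [if_neg h] at hω₀; exact lt_irrefl _ hω₀
  rw [if_pos hAa] at hω₀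
  have := hterm ω₀ hω₀
  rw [dCondExp_sub]
  simp only [hAa] at this
  linarith
end

section
/- Denominator asymptotics for two-fold JIVE: writing $\hat H_K = \sum_{a=1}^K \bar S_{a,0}\bar S_{a,1} = H_{1,K}+H_{2,K}+H_{3,K}$ with $H_{1,K}=\sum_a\pi_a^2$, $H_{2,K}=\sum_a\pi_a(\bar\eta_{a,0}+\bar\eta_{a,1})$, $H_{3,K}=\sum_a\bar\eta_{a,0}\bar\eta_{a,1}$, if $\sum_a\pi_{a,m}^2/(\sqrt{K_m}\sigma^2_{\bar\eta,m})\to\infty$, then $H_{2,K}/H_{1,K}\to 0$ and $H_{3,K}/H_{1,K}\to 0$ in probability, hence $\hat H_K/H_{1,K}\to 1$ in probability. -/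
open Finset Filter
open scoped Classical Topology

/-!
By independence, the products `η_p η_q` (`p ≠ q`) and `(η_{a0} η_{a1}) (η_{b0} η_{b1})` (`a ≠ b`)
have mean zero, so `E[H₂²] = 2 σ² H₁` and `E[H₃²] = K σ⁴`. With `c = H₁ / (√K σ²) → ∞` this gives
`E[(H₂/H₁)²] = 2 / (c √K) → 0` and `E[(H₃/H₁)²] = c⁻² → 0`, and Chebyshev's inequality turns
these into convergence in probability. Finally `Ĥ/H₁ - 1 = H₂/H₁ + H₃/H₁`.
-/

section Finite

variable {Ω : Type*} [Fintype Ω] {w : Ω → ℝ}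

lemma dExp_sum {ι : Type*} (s : Finset ι) (f : ι → Ω → ℝ) :
    dExp w (fun ω => ∑ i ∈ s, f i ω) = ∑ i ∈ s, dExp w (f i) := by
  simp only [dExp, mul_sum]
  exact sum_comm

lemma dExp_const_mul (r : ℝ) (f : Ω → ℝ) :
    dExp w (fun ω => r * f ω) = r * dExp w f := by
  simp only [dExp, mul_sum, mul_left_comm]

lemma dExp_div_const (f : Ω → ℝ) (r : ℝ) :
    dExp w (fun ω => f ω / r) = dExp w f / r := by
  simp only [dExp, sum_div, mul_div_assoc]

lemma dExp_const (hw1 : ∑ ω, w ω = 1) (r : ℝ) : dExp w (fun _ => r) = r := by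
  simp only [dExp, ← sum_mul, hw1, one_mul]

lemma dPr_nonneg (hw : ∀ ω, 0 ≤ w ω) (P : Ω → Prop) : 0 ≤ dPr w P :=
  sum_nonneg fun ω _ => by split_ifs <;> simp [hw ω]

lemma dPr_mono (hw : ∀ ω, 0 ≤ w ω) {P Q : Ω → Prop} (h : ∀ ω, P ω → Q ω) :
    dPr w P ≤ dPr w Q :=
  sum_le_sum fun ω _ => by
    by_cases hP : P ω <;> by_cases hQ : Q ω <;> simp_all

lemma dPr_or_le (hw : ∀ ω, 0 ≤ w ω) (P Q : Ω → Prop) :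
    dPr w (fun ω => P ω ∨ Q ω) ≤ dPr w P + dPr w Q := by
  rw [dPr, dPr, dPr, ← sum_add_distrib]
  exact sum_le_sum fun ω _ => by
    by_cases hP : P ω <;> by_cases hQ : Q ω <;> simp [hP, hQ, hw ω]

lemma dPr_le_dExp_sq_div (hw : ∀ ω, 0 ≤ w ω) (X : Ω → ℝ) {δ : ℝ} (hδ : 0 < δ) :
    dPr w (fun ω => δ ≤ |X ω|) ≤ dExp w (fun ω => X ω ^ 2) / δ ^ 2 := by
  rw [dPr, dExp, sum_div]
  refine sum_le_sum fun ω _ => ?_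
  split_ifs with h
  · have : 1 ≤ X ω ^ 2 / δ ^ 2 := by
      rw [one_le_div (by positivity), ← sq_abs (X ω)]
      exact pow_le_pow_left₀ hδ.le h 2
    calc w ω = w ω * 1 := (mul_one _).symm
      _ ≤ w ω * (X ω ^ 2 / δ ^ 2) := mul_le_mul_of_nonneg_left this (hw ω)
      _ = w ω * X ω ^ 2 / δ ^ 2 := (mul_div_assoc _ _ _).symm
  · have := hw ω
    positivity

lemma dExp_sq_sum_of_orthogonal {ι : Type*} [Fintype ι] [DecidableEq ι] (X : ι → Ω → ℝ) (s : ℝ)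
    (hX : ∀ i j, dExp w (fun ω => X i ω * X j ω) = if i = j then s else 0) (c : ι → ℝ) :
    dExp w (fun ω => (∑ i, c i * X i ω) ^ 2) = s * ∑ i, c i ^ 2 := by
  have hexpand : (fun ω => (∑ i, c i * X i ω) ^ 2)
      = fun ω => ∑ i, ∑ j, (c i * c j) * (X i ω * X j ω) := by
    funext ω
    rw [sq, sum_mul_sum]
    exact sum_congr rfl fun i _ => sum_congr rfl fun j _ => by ring
  simp only [hexpand, dExp_sum, dExp_const_mul, hX, mul_ite, mul_zero, sum_ite_eq,
    mem_univ, if_true, mul_sum]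
  exact sum_congr rfl fun i _ => by ring

end Finite

section Independence

variable {Ω α β : Type*} [Fintype Ω] [Fintype α] [Fintype β] {w : Ω → ℝ} {σ : ℝ}

def IndepFactors (w : Ω → ℝ) (η : α → β → Ω → ℝ) : Prop :=
  ∀ f : α → β → ℝ → ℝ,
    dExp w (fun ω => ∏ a, ∏ v, f a v (η a v ω)) = ∏ a, ∏ v, dExp w (fun ω => f a v (η a v ω))

lemma IndepFactors.dExp_prod {η : α → β → Ω → ℝ} (hindep : IndepFactors w η)
    (hw1 : ∑ ω, w ω = 1) (S : Finset (α × β)) (g : α × β → ℝ → ℝ) :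
    dExp w (fun ω => ∏ p ∈ S, g p (η p.1 p.2 ω))
      = ∏ p ∈ S, dExp w (fun ω => g p (η p.1 p.2 ω)) := by
  have hsplit : ∀ F : α × β → ℝ,
      ∏ p ∈ S, F p = ∏ a, ∏ v, if (a, v) ∈ S then F (a, v) else 1 := fun F => by
    rw [← Fintype.prod_prod_type (f := fun p => if p ∈ S then F p else 1), prod_ite_mem,
      univ_inter]
  have hE : ∀ a v, dExp w (fun ω => if (a, v) ∈ S then g (a, v) (η a v ω) else 1)
      = if (a, v) ∈ S then dExp w (fun ω => g (a, v) (η a v ω)) else 1 := fun a v => by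
    split_ifs
    · rfl
    · exact dExp_const hw1 1
  simp only [hsplit, ← hE]
  exact hindep fun a v x => if (a, v) ∈ S then g (a, v) x else 1

lemma IndepFactors.dExp_mul [DecidableEq α] [DecidableEq β] {η : α → β → Ω → ℝ}
    (hindep : IndepFactors w η) (hw1 : ∑ ω, w ω = 1) (hmean : ∀ a v, dExp w (η a v) = 0)
    (hvar : ∀ a v, dExp w (fun ω => η a v ω ^ 2) = σ ^ 2) (p q : α × β) :
    dExp w (fun ω => η p.1 p.2 ω * η q.1 q.2 ω) = if p = q then σ ^ 2 else 0 := by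
  split_ifs with hpq
  · subst hpq
    simpa only [sq] using hvar p.1 p.2
  · have h := hindep.dExp_prod hw1 {p, q} fun _ x => x
    simp only [prod_pair hpq] at h
    rw [h, hmean, zero_mul]

variable {η : α → Fin 2 → Ω → ℝ}

lemma IndepFactors.dExp_mul_mul (hindep : IndepFactors w η) (hw1 : ∑ ω, w ω = 1)
    (hmean : ∀ a v, dExp w (η a v) = 0) (hvar : ∀ a v, dExp w (fun ω => η a v ω ^ 2) = σ ^ 2)
    (a b : α) :
    dExp w (fun ω => (η a 0 ω * η a 1 ω) * (η b 0 ω * η b 1 ω))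
      = if a = b then σ ^ 4 else 0 := by
  split_ifs with hab
  · subst hab
    have h := hindep.dExp_prod hw1 ({a} ×ˢ univ) fun _ x => x ^ 2
    simp only [prod_product, prod_singleton, Fin.prod_univ_two, hvar] at h
    rw [show σ ^ 4 = σ ^ 2 * σ ^ 2 by ring, ← h]
    congr 1 with ω
    ring
  · have h := hindep.dExp_prod hw1 ({a, b} ×ˢ univ) fun _ x => x
    simpa only [prod_product, prod_pair hab, Fin.prod_univ_two, hmean, zero_mul] using h

lemma IndepFactors.dExp_sq_sum_mul_add (hindep : IndepFactors w η) (hw1 : ∑ ω, w ω = 1)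
    (hmean : ∀ a v, dExp w (η a v) = 0) (hvar : ∀ a v, dExp w (fun ω => η a v ω ^ 2) = σ ^ 2)
    (c : α → ℝ) :
    dExp w (fun ω => (∑ a, c a * (η a 0 ω + η a 1 ω)) ^ 2) = 2 * σ ^ 2 * ∑ a, c a ^ 2 := by
  have h := dExp_sq_sum_of_orthogonal (fun p : α × Fin 2 => η p.1 p.2) (σ ^ 2)
    (hindep.dExp_mul hw1 hmean hvar) fun p => c p.1
  simp only [Fintype.sum_prod_type, Fin.sum_univ_two, ← mul_add] at h
  rw [h, mul_sum, mul_sum]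
  exact sum_congr rfl fun a _ => by ring

lemma IndepFactors.dExp_sq_sum_mul (hindep : IndepFactors w η) (hw1 : ∑ ω, w ω = 1)
    (hmean : ∀ a v, dExp w (η a v) = 0) (hvar : ∀ a v, dExp w (fun ω => η a v ω ^ 2) = σ ^ 2) :
    dExp w (fun ω => (∑ a, η a 0 ω * η a 1 ω) ^ 2) = Fintype.card α * σ ^ 4 := by
  have h := dExp_sq_sum_of_orthogonal (fun a ω => η a 0 ω * η a 1 ω) (σ ^ 4)
    (hindep.dExp_mul_mul hw1 hmean hvar) fun _ => 1
  simpa only [one_mul, one_pow, sum_const, card_univ, nsmul_eq_mul, mul_one, mul_comm] using h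

lemma IndepFactors.dExp_sq_sum_mul_add_div (hindep : IndepFactors w η) (hw1 : ∑ ω, w ω = 1)
    (hmean : ∀ a v, dExp w (η a v) = 0) (hvar : ∀ a v, dExp w (fun ω => η a v ω ^ 2) = σ ^ 2)
    (c : α → ℝ) :
    dExp w (fun ω => ((∑ a, c a * (η a 0 ω + η a 1 ω)) / ∑ a, c a ^ 2) ^ 2)
      = 2 * ((∑ a, c a ^ 2) / σ ^ 2)⁻¹ := by
  rw [inv_div]
  simp only [div_pow, dExp_div_const, hindep.dExp_sq_sum_mul_add hw1 hmean hvar]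
  rcases eq_or_ne (∑ a, c a ^ 2) 0 with h | h
  · simp [h]
  · field_simp

lemma IndepFactors.dExp_sq_sum_mul_div (hindep : IndepFactors w η) (hw1 : ∑ ω, w ω = 1)
    (hmean : ∀ a v, dExp w (η a v) = 0) (hvar : ∀ a v, dExp w (fun ω => η a v ω ^ 2) = σ ^ 2)
    (r : ℝ) :
    dExp w (fun ω => ((∑ a, η a 0 ω * η a 1 ω) / r) ^ 2)
      = (r / (√(Fintype.card α) * σ ^ 2))⁻¹ ^ 2 := by
  simp only [div_pow, dExp_div_const, hindep.dExp_sq_sum_mul hw1 hmean hvar, inv_div, mul_pow,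
    Real.sq_sqrt (Nat.cast_nonneg _), ← pow_mul]

end Independence

lemma sum_add_mul_add_div_sub_one {ι : Type*} (s : Finset ι) (p x y : ι → ℝ)
    (h : ∑ i ∈ s, p i ^ 2 ≠ 0) :
    (∑ i ∈ s, (p i + x i) * (p i + y i)) / ∑ i ∈ s, p i ^ 2 - 1
      = (∑ i ∈ s, p i * (x i + y i)) / ∑ i ∈ s, p i ^ 2
        + (∑ i ∈ s, x i * y i) / ∑ i ∈ s, p i ^ 2 := by
  rw [← add_div, sub_eq_iff_eq_add, div_add_one h, ← sum_add_distrib, ← sum_add_distrib]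
  exact congrArg (· / _) (sum_congr rfl fun i _ => by ring)

section Convergence

variable {ι : Type*} {Ω : ι → Type*} [∀ i, Fintype (Ω i)] {w : ∀ i, Ω i → ℝ} {l : Filter ι}

def TendstoInDPrZero (w : ∀ i, Ω i → ℝ) (l : Filter ι) (X : ∀ i, Ω i → ℝ) : Prop :=
  ∀ δ > (0 : ℝ), Tendsto (fun i => dPr (w i) fun ω => δ ≤ |X i ω|) l (𝓝 0)

lemma TendstoInDPrZero.of_tendsto_dExp_sq (hw : ∀ i ω, 0 ≤ w i ω) {X : ∀ i, Ω i → ℝ}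
    (hX : Tendsto (fun i => dExp (w i) fun ω => X i ω ^ 2) l (𝓝 0)) :
    TendstoInDPrZero w l X := by
  intro δ hδ
  have hbound : Tendsto (fun i => dExp (w i) (fun ω => X i ω ^ 2) / δ ^ 2) l (𝓝 0) := by
    simpa only [zero_div] using hX.div_const (δ ^ 2)
  exact tendsto_of_tendsto_of_tendsto_of_le_of_le tendsto_const_nhds hbound
    (fun i => dPr_nonneg (hw i) _) fun i => dPr_le_dExp_sq_div (hw i) (X i) hδ

lemma TendstoInDPrZero.add (hw : ∀ i ω, 0 ≤ w i ω) {X Y : ∀ i, Ω i → ℝ}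
    (hX : TendstoInDPrZero w l X) (hY : TendstoInDPrZero w l Y) :
    TendstoInDPrZero w l fun i ω => X i ω + Y i ω := by
  intro δ hδ
  have hsplit : ∀ i, dPr (w i) (fun ω => δ ≤ |X i ω + Y i ω|)
      ≤ dPr (w i) (fun ω => δ / 2 ≤ |X i ω|) + dPr (w i) (fun ω => δ / 2 ≤ |Y i ω|) :=
    fun i => le_trans (dPr_mono (hw i) fun ω hω => by
      by_contra! h
      linarith [abs_add_le (X i ω) (Y i ω)]) (dPr_or_le (hw i) _ _)
  have hsum := (hX (δ / 2) (half_pos hδ)).add (hY (δ / 2) (half_pos hδ))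
  rw [add_zero] at hsum
  exact tendsto_of_tendsto_of_tendsto_of_le_of_le tendsto_const_nhds hsum
    (fun i => dPr_nonneg (hw i) _) hsplit

lemma TendstoInDPrZero.congr' {X Y : ∀ i, Ω i → ℝ} (hXY : ∀ᶠ i in l, ∀ ω, X i ω = Y i ω)
    (hX : TendstoInDPrZero w l X) : TendstoInDPrZero w l Y :=
  fun δ hδ => (hX δ hδ).congr' (hXY.mono fun i h => by simp only [h])

end Convergence

lemma tendsto_div_atTop_of_tendsto_div_mul {ι : Type*} {l : Filter ι} {a b c : ι → ℝ}
    (habc : Tendsto (fun i => a i / (b i * c i)) l atTop) (hb : Tendsto b l atTop) :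
    Tendsto (fun i => a i / c i) l atTop :=
  (habc.atTop_mul_atTop₀ hb).congr' <| (hb.eventually_gt_atTop 0).mono fun i hi => by
    rw [mul_comm (b i), ← div_div, div_mul_cancel₀ _ hi.ne']

theorem stmt14_general
    (Ω : ℕ → Type) (inst : ∀ m, Fintype (Ω m))
    (w : ∀ m, Ω m → ℝ) (hw : ∀ m ω, 0 ≤ w m ω) (hw1 : ∀ m, ∑ ω, w m ω = 1)
    (K : ℕ → ℕ) (hKtop : Tendsto K atTop atTop)
    (π : ∀ m, Fin (K m) → ℝ)
    (η : ∀ m, Fin (K m) → Fin 2 → Ω m → ℝ)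
    (ση : ℕ → ℝ)
    -- i.i.d. mean-zero errors with variance ση² across (cell, fold)
    (hmean : ∀ m a v, dExp (w m) (η m a v) = 0)
    (hvar : ∀ m a v, dExp (w m) (fun ω => (η m a v ω) ^ 2) = (ση m) ^ 2)
    (hindep : ∀ m (f : Fin (K m) → Fin 2 → ℝ → ℝ),
      dExp (w m) (fun ω => ∏ a, ∏ v, f a v (η m a v ω))
        = ∏ a, ∏ v, dExp (w m) (fun ω => f a v (η m a v ω)))
    -- concentration: ∑ₐ πₐ²/(√K ση²) → ∞
    (hconc : Tendsto
      (fun m => (∑ a, (π m a) ^ 2) / (Real.sqrt (K m) * (ση m) ^ 2))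
      atTop atTop) :
    ∀ δ > (0 : ℝ),
      (Tendsto (fun m =>
        dPr (w m) (fun ω => δ ≤
          |(∑ a, π m a * (η m a 0 ω + η m a 1 ω)) / (∑ a, (π m a) ^ 2)|))
        atTop (𝓝 0))
      ∧ (Tendsto (fun m =>
          dPr (w m) (fun ω => δ ≤
            |(∑ a, η m a 0 ω * η m a 1 ω) / (∑ a, (π m a) ^ 2)|))
          atTop (𝓝 0))
      ∧ (Tendsto (fun m =>
          dPr (w m) (fun ω => δ ≤
            |(∑ a, (π m a + η m a 0 ω) * (π m a + η m a 1 ω))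
                / (∑ a, (π m a) ^ 2) - 1|))
          atTop (𝓝 0)) := by
  have hH₁ : Tendsto (fun m => (∑ a, π m a ^ 2) / ση m ^ 2) atTop atTop :=
    tendsto_div_atTop_of_tendsto_div_mul hconc
      (Real.tendsto_sqrt_atTop.comp (tendsto_natCast_atTop_atTop.comp hKtop))
  have hH₂ : TendstoInDPrZero w atTop
      fun m ω => (∑ a, π m a * (η m a 0 ω + η m a 1 ω)) / ∑ a, π m a ^ 2 := by
    refine .of_tendsto_dExp_sq hw ?_
    simp only [IndepFactors.dExp_sq_sum_mul_add_div (hindep _) (hw1 _) (hmean _) (hvar _)]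
    simpa only [Pi.inv_apply, mul_zero] using hH₁.inv_tendsto_atTop.const_mul 2
  have hH₃ : TendstoInDPrZero w atTop
      fun m ω => (∑ a, η m a 0 ω * η m a 1 ω) / ∑ a, π m a ^ 2 := by
    refine .of_tendsto_dExp_sq hw ?_
    simp only [IndepFactors.dExp_sq_sum_mul_div (hindep _) (hw1 _) (hmean _) (hvar _),
      Fintype.card_fin]
    simpa only [Pi.inv_apply, ne_eq, OfNat.ofNat_ne_zero, not_false_eq_true, zero_pow]
      using hconc.inv_tendsto_atTop.pow 2
  have hĤ : TendstoInDPrZero w atTop fun m ω =>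
      (∑ a, (π m a + η m a 0 ω) * (π m a + η m a 1 ω)) / (∑ a, π m a ^ 2) - 1 :=
    (hH₂.add hw hH₃).congr' <| (hH₁.eventually_gt_atTop 0).mono fun m hm ω =>
      (sum_add_mul_add_div_sub_one _ _ _ _ fun h => by simp [h] at hm).symm
  exact fun δ hδ => ⟨hH₂ δ hδ, hH₃ δ hδ, hĤ δ hδ⟩

/-- two-fold JIVE denominator asymptotics:
H₂/H₁ →_P 0, H₃/H₁ →_P 0, hence Ĥ/H₁ →_P 1. -/
theorem stmt14
    (Ω : ℕ → Type) (inst : ∀ m, Fintype (Ω m))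
    (w : ∀ m, Ω m → ℝ) (hw : ∀ m ω, 0 ≤ w m ω) (hw1 : ∀ m, ∑ ω, w m ω = 1)
    (K : ℕ → ℕ) (hK : ∀ m, 0 < K m) (hKtop : Tendsto K atTop atTop)
    (π : ∀ m, Fin (K m) → ℝ)
    (η : ∀ m, Fin (K m) → Fin 2 → Ω m → ℝ)
    (ση : ℕ → ℝ) (hση : ∀ m, 0 < ση m)
    -- i.i.d. mean-zero errors with variance ση² across (cell, fold)
    (hmean : ∀ m a v, dExp (w m) (η m a v) = 0)
    (hvar : ∀ m a v, dExp (w m) (fun ω => (η m a v ω) ^ 2) = (ση m) ^ 2)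
    (hindep : ∀ m (f : Fin (K m) → Fin 2 → ℝ → ℝ),
      dExp (w m) (fun ω => ∏ a, ∏ v, f a v (η m a v ω))
        = ∏ a, ∏ v, dExp (w m) (fun ω => f a v (η m a v ω)))
    (hident : ∀ m (a b : Fin (K m)) (v u : Fin 2) (B : ℝ → Prop),
      dPr (w m) (fun ω => B (η m a v ω)) = dPr (w m) (fun ω => B (η m b u ω)))
    -- concentration: ∑ₐ πₐ²/(√K ση²) → ∞
    (hconc : Tendsto
      (fun m => (∑ a, (π m a) ^ 2) / (Real.sqrt (K m) * (ση m) ^ 2))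
      atTop atTop) :
    ∀ δ > (0 : ℝ),
      (Tendsto (fun m =>
        dPr (w m) (fun ω => δ ≤
          |(∑ a, π m a * (η m a 0 ω + η m a 1 ω)) / (∑ a, (π m a) ^ 2)|))
        atTop (𝓝 0))
      ∧ (Tendsto (fun m =>
          dPr (w m) (fun ω => δ ≤
            |(∑ a, η m a 0 ω * η m a 1 ω) / (∑ a, (π m a) ^ 2)|))
          atTop (𝓝 0))
      ∧ (Tendsto (fun m =>
          dPr (w m) (fun ω => δ ≤
            |(∑ a, (π m a + η m a 0 ω) * (π m a + η m a 1 ω))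
                / (∑ a, (π m a) ^ 2) - 1|))
          atTop (𝓝 0)) :=
  stmt14_general Ω inst w hw hw1 K hKtop π η ση hmean hvar hindep hconc
end
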